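/- arXiv:1812.11340 — 2 statements merged into one kernel-verified Lean document; each statement's English description precedes it below -/
import Mathlib

section
/- Let m ≥ 1 be an integer, b > 0, and c₁, …, c_m > 0 with sin(πc_j/b) ≠ 0 for all j. Let A ∈ M_{2m}(ℝ) be the block-diagonal matrix whose j-th 2×2 diagonal block is (1/c_j)·[[sin(2c_jπ/b), 1 − cos(2c_jπ/b)], [cos(2c_jπ/b) − 1, sin(2c_jπ/b)]]. Then for every V, W ∈ ℝ^{2m} and v ∈ ℝ, the determinant of the (2m+1)×(2m+1) bordered matrix [[A, W], [Vᵀ, v]] (A in the top-left 2m×2m corner, W as last column, Vᵀ as last row, v in the bottom-right corner) equals det(A) · ( v + (1/2)·Σ_{j=1}^{m} c_j·( V_{2j−1}W_{2j} − V_{2j}W_{2j−1} − (V_{2j−1}W_{2j−1} + V_{2j}W_{2j})·cos(c_jπ/b)/sin(c_jπ/b) ) ). -/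
open Real Finset Matrix

/-- The `j`-th `2×2` diagonal block
`(1/c)·[[sin(2cπ/b), 1 − cos(2cπ/b)], [cos(2cπ/b) − 1, sin(2cπ/b)]]`. -/
noncomputable def Ablock (b c : ℝ) : Matrix (Fin 2) (Fin 2) ℝ :=
  (1 / c) • !![Real.sin (2 * c * Real.pi / b), 1 - Real.cos (2 * c * Real.pi / b);
               Real.cos (2 * c * Real.pi / b) - 1, Real.sin (2 * c * Real.pi / b)]

/-- The `2m×2m` block-diagonal matrix `A` with blocks `Ablock b (c j)`. -/
noncomputable def Amat (m : ℕ) (b : ℝ) (c : Fin m → ℝ) :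
    Matrix (Fin 2 × Fin m) (Fin 2 × Fin m) ℝ :=
  Matrix.blockDiagonal fun j => Ablock b (c j)

/-- The `(2m+1)×(2m+1)` bordered matrix `[[A, W], [Vᵀ, v]]`: `A` in the top-left
corner, the column `W` as last column, the row `Vᵀ` as last row, and `v` in the
bottom-right corner. -/
noncomputable def borderedMat (m : ℕ) (b : ℝ) (c : Fin m → ℝ)
    (V W : Fin 2 × Fin m → ℝ) (v : ℝ) :
    Matrix ((Fin 2 × Fin m) ⊕ Unit) ((Fin 2 × Fin m) ⊕ Unit) ℝ :=
  Matrix.fromBlocks (Amat m b c)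
    (Matrix.of fun i _ => W i)
    (Matrix.of fun _ j => V j)
    (Matrix.of fun _ _ => v)

/-!
By the Schur complement, `det [[A, W], [Vᵀ, v]] = det A · (v − Vᵀ A⁻¹ W)`. Writing
`θ = cπ/b`, the half-angle formulas turn each block of `A` into `(2 sin θ / c) • R(θ)` with
`R(θ)` a rotation, so `A⁻¹` is block diagonal with blocks `(c / (2 sin θ)) • R(θ)ᵀ`, which
makes `Vᵀ A⁻¹ W` the stated sum.
-/

theorem Matrix.det_fromBlocks_of_mul_eq_one {n R : Type*} [Fintype n] [DecidableEq n]
    [CommRing R] {A B : Matrix n n R} (hAB : A * B = 1) (V W : n → R) (v : R) :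
    (fromBlocks A (of fun i (_ : Unit) => W i) (of fun _ j => V j) (of fun _ _ => v)).det =
      A.det * (v - V ⬝ᵥ (B *ᵥ W)) := by
  let := invertibleOfRightInverse _ _ hAB
  rw [det_fromBlocks₁₁, invOf_eq_right_inv hAB, det_unique (_ - _), dotProduct_mulVec]
  rfl

theorem Matrix.dotProduct_blockDiagonal_mulVec {m o R : Type*} [Fintype m] [Fintype o]
    [DecidableEq o] [CommSemiring R] (B : o → Matrix m m R) (V W : m × o → R) :
    V ⬝ᵥ (blockDiagonal B *ᵥ W) = ∑ j, (fun i => V (i, j)) ⬝ᵥ (B j *ᵥ fun i => W (i, j)) := by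
  simp only [dotProduct, mulVec, blockDiagonal_apply, Fintype.sum_prod_type, ite_mul, zero_mul,
    Finset.sum_ite_eq, Finset.mem_univ, if_true]
  exact Finset.sum_comm

noncomputable def AblockInv (b c : ℝ) : Matrix (Fin 2) (Fin 2) ℝ :=
  (c / 2) • !![Real.cos (c * π / b) / Real.sin (c * π / b), -1;
               1, Real.cos (c * π / b) / Real.sin (c * π / b)]

lemma Ablock_mul_AblockInv {b c : ℝ} (hc : c ≠ 0) (hs : Real.sin (c * π / b) ≠ 0) :
    Ablock b c * AblockInv b c = 1 := by
  have hθ : 2 * c * π / b = 2 * (c * π / b) := by ring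
  have hpyth := Real.sin_sq_add_cos_sq (c * π / b)
  rw [Ablock, AblockInv, hθ, Real.sin_two_mul, Real.cos_two_mul_eq_one_sub, smul_mul_smul_comm,
    mul_fin_two, one_fin_two]
  ext i j
  fin_cases i <;> fin_cases j <;>
    simp only [Matrix.smul_apply, of_apply, cons_val', cons_val_zero, cons_val_one, cons_val_fin_one,
      smul_eq_mul, Fin.zero_eta, Fin.mk_one] <;>
    field_simp <;> grind

lemma Amat_mul_blockDiagonal_AblockInv {m : ℕ} {b : ℝ} {c : Fin m → ℝ} (hc : ∀ j, c j ≠ 0)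
    (hs : ∀ j, Real.sin (c j * π / b) ≠ 0) :
    Amat m b c * blockDiagonal (fun j => AblockInv b (c j)) = 1 := by
  simp only [Amat, ← blockDiagonal_mul, Ablock_mul_AblockInv (hc _) (hs _)]
  exact blockDiagonal_one

lemma dotProduct_AblockInv_mulVec (b c : ℝ) (V W : Fin 2 → ℝ) :
    V ⬝ᵥ (AblockInv b c *ᵥ W) = -(c / 2) * (V 0 * W 1 - V 1 * W 0 -
      (V 0 * W 0 + V 1 * W 1) * Real.cos (c * π / b) / Real.sin (c * π / b)) := by
  simp only [dotProduct, mulVec, AblockInv, Matrix.smul_apply, of_apply, cons_val', cons_val_fin_one,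
    smul_eq_mul, Fin.sum_univ_two, cons_val_zero, cons_val_one]
  ring

theorem statement2_general (m : ℕ) (b : ℝ)
    (c : Fin m → ℝ) (hc : ∀ j, 0 < c j)
    (hsin : ∀ j, Real.sin (Real.pi * c j / b) ≠ 0)
    (V W : Fin 2 × Fin m → ℝ) (v : ℝ) :
    (borderedMat m b c V W v).det =
      (Amat m b c).det *
        (v + (1 / 2) * ∑ j, c j *
          (V (0, j) * W (1, j) - V (1, j) * W (0, j) -
            (V (0, j) * W (0, j) + V (1, j) * W (1, j)) *
              Real.cos (c j * Real.pi / b) / Real.sin (c j * Real.pi / b))) := by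
  have hs : ∀ j, Real.sin (c j * π / b) ≠ 0 := fun j => by rw [mul_comm]; exact hsin j
  rw [borderedMat, det_fromBlocks_of_mul_eq_one
    (Amat_mul_blockDiagonal_AblockInv (fun j => (hc j).ne') hs), dotProduct_blockDiagonal_mulVec]
  simp only [dotProduct_AblockInv_mulVec, Finset.mul_sum, ← Finset.sum_neg_distrib, sub_eq_add_neg]
  congr 2
  exact Finset.sum_congr rfl fun j _ => by ring

/-- Bordered-determinant formula: for `m ≥ 1`, `b > 0`,
`c₁, …, c_m > 0` with `sin(πc_j/b) ≠ 0`, and any `V, W ∈ ℝ^{2m}`, `v ∈ ℝ`,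
`det [[A, W], [Vᵀ, v]] = det A · (v + ½ Σ_j c_j (V_{2j−1}W_{2j} − V_{2j}W_{2j−1}
− (V_{2j−1}W_{2j−1} + V_{2j}W_{2j})·cot(c_jπ/b)))`.
Here the entry `2j−1` of a vector is its `(0, j)` entry and the entry `2j` is its
`(1, j)` entry. -/
theorem statement2 (m : ℕ) (hm : 1 ≤ m) (b : ℝ) (hb : 0 < b)
    (c : Fin m → ℝ) (hc : ∀ j, 0 < c j)
    (hsin : ∀ j, Real.sin (Real.pi * c j / b) ≠ 0)
    (V W : Fin 2 × Fin m → ℝ) (v : ℝ) :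
    (borderedMat m b c V W v).det =
      (Amat m b c).det *
        (v + (1 / 2) * ∑ j, c j *
          (V (0, j) * W (1, j) - V (1, j) * W (0, j) -
            (V (0, j) * W (0, j) + V (1, j) * W (1, j)) *
              Real.cos (c j * Real.pi / b) / Real.sin (c j * Real.pi / b))) :=
  statement2_general m b c hc hsin V W v
end

section
/- Let n ≥ 1 and let A, B ∈ Mₙ(ℝ). Suppose that rank(A) = n − 1 and that the function η ↦ det(A + η·B) is o(η) as η → 0 (equivalently, det(A) = 0 and the coefficient of η in the polynomial det(A + ηB) also vanishes). Then B maps the kernel of A into the image of A: for every u ∈ ℝⁿ with A·u = 0, there exists w ∈ ℝⁿ with B·u = A·w. -/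
/-!
Let `u ≠ 0` span `ker A` and pick `k` with `u k ≠ 0`. By Cramer's rule, replacing the `k`-th
column of `M` by `M u` multiplies `det M` by `u k`; for `M = A + η B` we have `M u = η B u`, so
`u k · det (A + η B) = η · g η` with `g η = det (A + η B with column k replaced by B u)`.
The hypothesis `det (A + η B) = o(η)` then forces `g 0 = 0`, so `A` with column `k` replaced
by `B u` has a kernel vector `x`. Since `ker A = span u` and `u k ≠ 0`, we get `x k ≠ 0`, and
`x` expresses `B u` through the columns of `A`.
-/

open Matrix Filter Asymptotics Topology Module

theorem eq_zero_of_isLittleO_smul_self {𝕜 E : Type*} [NontriviallyNormedField 𝕜]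
    [NormedAddCommGroup E] [NormedSpace 𝕜 E] {g : 𝕜 → E} (hg : ContinuousAt g 0)
    (h : (fun x => x • g x) =o[𝓝 0] fun x => x) : g 0 = 0 := by
  have h' := (isBigO_refl (fun x : 𝕜 => x⁻¹) (𝓝[≠] 0)).smul_isLittleO (h.mono nhdsWithin_le_nhds)
  have hlim : Tendsto g (𝓝[≠] 0) (𝓝 0) := by
    rw [← isLittleO_one_iff 𝕜]
    refine h'.congr' ?_ ?_ <;> filter_upwards [self_mem_nhdsWithin] with x hx
    · exact inv_smul_smul₀ hx _
    · exact inv_mul_cancel₀ hx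
  exact tendsto_nhds_unique (hg.tendsto.mono_left nhdsWithin_le_nhds) hlim

namespace Matrix

variable {n R K : Type*} [Fintype n]

theorem updateCol_mulVec {m : Type*} [DecidableEq n] [CommSemiring R] (A : Matrix m n R)
    (k : n) (v : m → R) (x : n → R) :
    A.updateCol k v *ᵥ x = x k • v + A *ᵥ Function.update x k 0 := by
  ext i
  simp [mulVec, dotProduct, updateCol_apply, Function.update_apply, Finset.sum_ite,
    Finset.filter_ne', Finset.filter_eq', mul_comm]

theorem det_updateCol_mulVec_self [DecidableEq n] [CommRing R] (M : Matrix n n R) (k : n)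
    (u : n → R) : (M.updateCol k (M *ᵥ u)).det = u k * M.det := by
  rw [← cramer_apply, cramer_eq_adjugate_mulVec, mulVec_mulVec, adjugate_mul, smul_mulVec,
    one_mulVec, Pi.smul_apply, smul_eq_mul, mul_comm]

theorem mul_det_add_smul_eq [DecidableEq n] [CommRing R] {A : Matrix n n R} {u : n → R}
    (hu : A *ᵥ u = 0) (B : Matrix n n R) (k : n) (η : R) :
    u k * (A + η • B).det = η * ((A + η • B).updateCol k (B *ᵥ u)).det := by
  have hpencil : (A + η • B) *ᵥ u = η • (B *ᵥ u) := by
    rw [add_mulVec, hu, smul_mulVec, zero_add]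
  rw [← det_updateCol_mulVec_self, hpencil, det_updateCol_smul]

theorem ker_mulVecLin_eq_span_singleton [Field K] {A : Matrix n n K}
    (hrank : A.rank = Fintype.card n - 1) {u : n → K} (hu : A *ᵥ u = 0) (hu0 : u ≠ 0) :
    LinearMap.ker A.mulVecLin = K ∙ u := by
  have hle : K ∙ u ≤ LinearMap.ker A.mulVecLin := by
    rwa [Submodule.span_singleton_le_iff_mem]
  have hker : finrank K (LinearMap.ker A.mulVecLin) ≤ finrank K (K ∙ u) := by
    have hsum := A.mulVecLin.finrank_range_add_finrank_ker
    have hpos := Submodule.finrank_mono hle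
    rw [finrank_fintype_fun_eq_card] at hsum
    rw [finrank_span_singleton hu0] at hpos ⊢
    rw [Matrix.rank] at hrank
    omega
  exact (Submodule.eq_of_le_of_finrank_le hle hker).symm

theorem exists_mulVec_eq_of_det_updateCol_eq_zero [DecidableEq n] [Field K] {A : Matrix n n K}
    {u : n → K} (hker : LinearMap.ker A.mulVecLin = K ∙ u) {k : n} (huk : u k ≠ 0)
    {v : n → K} (hdet : (A.updateCol k v).det = 0) : ∃ w, v = A *ᵥ w := by
  obtain ⟨x, hx0, hx⟩ := exists_mulVec_eq_zero_iff.mpr hdet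
  rw [updateCol_mulVec] at hx
  by_cases hxk : x k = 0
  · have hxu : x ∈ K ∙ u := by
      rw [← hxk, Function.update_eq_self, hxk, zero_smul, zero_add] at hx
      rwa [← hker, LinearMap.mem_ker, mulVecLin_apply]
    obtain ⟨t, rfl⟩ := Submodule.mem_span_singleton.mp hxu
    have ht : t = 0 := by simpa [huk] using hxk
    simp [ht] at hx0
  · refine ⟨-(x k)⁻¹ • Function.update x k 0, ?_⟩
    rw [mulVec_smul, neg_smul, ← smul_neg, ← eq_neg_of_add_eq_zero_left hx, inv_smul_smul₀ hxk]

end Matrix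

theorem statement3_general (n : ℕ) (A B : Matrix (Fin n) (Fin n) ℝ)
    (hrank : A.rank = n - 1)
    (ho : (fun η : ℝ => (A + η • B).det) =o[nhds (0 : ℝ)] fun η => η) :
    ∀ u : Fin n → ℝ, A.mulVec u = 0 → ∃ w : Fin n → ℝ, B.mulVec u = A.mulVec w := by
  intro u hu
  rcases eq_or_ne u 0 with rfl | hu0
  · exact ⟨0, by simp⟩
  obtain ⟨k, hk⟩ := Function.ne_iff.mp hu0
  let g : ℝ → ℝ := fun η => ((A + η • B).updateCol k (B *ᵥ u)).det
  have hg : (fun η => η • g η) =o[𝓝 0] fun η => η := by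
    simpa only [g, smul_eq_mul, ← mul_det_add_smul_eq hu] using ho.const_mul_left (u k)
  have hg0 : g 0 = 0 := eq_zero_of_isLittleO_smul_self (by fun_prop) hg
  have hker := ker_mulVecLin_eq_span_singleton (by simpa using hrank) hu hu0
  exact exists_mulVec_eq_of_det_updateCol_eq_zero hker hk (by simpa [g] using hg0)

/-- Let `A, B` be real `n×n` matrices with `rank A = n − 1`, and
suppose `η ↦ det(A + η·B)` is `o(η)` as `η → 0`. Then `B` maps the kernel of `A`
into the image of `A`: for every `u` with `A·u = 0` there is `w` with `B·u = A·w`. -/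
theorem statement3 (n : ℕ) (hn : 1 ≤ n) (A B : Matrix (Fin n) (Fin n) ℝ)
    (hrank : A.rank = n - 1)
    (ho : (fun η : ℝ => (A + η • B).det) =o[nhds (0 : ℝ)] fun η => η) :
    ∀ u : Fin n → ℝ, A.mulVec u = 0 → ∃ w : Fin n → ℝ, B.mulVec u = A.mulVec w :=
  statement3_general n A B hrank ho
end
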